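/- arXiv:1707.00923 — 3 statements merged into one kernel-verified Lean document; each statement's English description precedes it below -/
import Mathlib

section
/- In the setting of a bounded coercive sesquilinear form a on V and an injective dense-range j ∈ L(V,H), the associated operator A is strictly m-accretive (in particular surjective with bounded inverse), and A⁻¹ = j ∘ 𝒜⁻¹ ∘ k, where 𝒜 : V → V* is the Lax–Milgram operator of a and k : H → V* is the canonical injection y ↦ ⟨y, j(·)⟩_H. -/
/-!
If `(x, y)` lies in the graph of `A`, witnessed by `u` with `j u = x`, then testing the defining
identity with `v = u` gives `Re ⟨x, y⟩ = Re a(u, u) ≥ α ‖u‖² ≥ (α / c²) ‖x‖²`. The same identity,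
read for all `v`, says `𝒜 u = k y`, so `u = 𝒜⁻¹ (k y)`; conversely `u := 𝒜⁻¹ (k y)` satisfies
it, which gives surjectivity.
-/

theorem div_mul_le_of_nonneg {K : Type*} [Field K] [LinearOrder K] [IsStrictOrderedRing K]
    {a : K} (ha : 0 ≤ a) (b : K) : a / b * b ≤ a := by
  rcases eq_or_ne b 0 with rfl | hb
  · simpa using ha
  · rw [div_mul_cancel₀ _ hb]

section AssociatedOperator

variable {𝕜 V H : Type*} [RCLike 𝕜] [NormedAddCommGroup V] [NormedSpace 𝕜 V]
  [NormedAddCommGroup H] [InnerProductSpace 𝕜 H]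

def associatedGraph (a : V →L[𝕜] V →L⋆[𝕜] 𝕜) (j : V →L[𝕜] H) : Set (H × H) :=
  {p | ∃ u : V, j u = p.1 ∧ ∀ v : V, a u v = inner 𝕜 (j v) p.2}

variable {a : V →L[𝕜] V →L⋆[𝕜] 𝕜} {j : V →L[𝕜] H}

theorem re_inner_ge_of_mem_associatedGraph {α c : ℝ} (hα : 0 ≤ α)
    (hcoer : ∀ u : V, α * ‖u‖ ^ 2 ≤ RCLike.re (a u u)) (hjc : ∀ u : V, ‖j u‖ ≤ c * ‖u‖)
    {x y : H} (hxy : (x, y) ∈ associatedGraph a j) :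
    α / c ^ 2 * ‖x‖ ^ 2 ≤ RCLike.re (inner 𝕜 x y) := by
  obtain ⟨u, rfl, hu⟩ := hxy
  have hx : ‖j u‖ ^ 2 ≤ c ^ 2 * ‖u‖ ^ 2 := by
    rw [← mul_pow]
    exact pow_le_pow_left₀ (norm_nonneg _) (hjc u) 2
  calc α / c ^ 2 * ‖j u‖ ^ 2 ≤ α / c ^ 2 * (c ^ 2 * ‖u‖ ^ 2) := by gcongr
    _ = α / c ^ 2 * c ^ 2 * ‖u‖ ^ 2 := by ring
    _ ≤ α * ‖u‖ ^ 2 := by gcongr; exact div_mul_le_of_nonneg hα _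
    _ ≤ RCLike.re (a u u) := hcoer u
    _ = RCLike.re (inner 𝕜 (j u) y) := by rw [hu u]

variable {E : V ≃L[𝕜] (V →L⋆[𝕜] 𝕜)} {k : H →L[𝕜] (V →L⋆[𝕜] 𝕜)}

theorem mem_associatedGraph_apply_symm (hE : ∀ u v : V, E u v = a u v)
    (hk : ∀ (y : H) (v : V), k y v = inner 𝕜 (j v) y) (y : H) :
    (j (E.symm (k y)), y) ∈ associatedGraph a j :=
  ⟨E.symm (k y), rfl, fun v => by rw [← hE, E.apply_symm_apply, hk]⟩

theorem eq_apply_symm_of_mem_associatedGraph (hE : ∀ u v : V, E u v = a u v)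
    (hk : ∀ (y : H) (v : V), k y v = inner 𝕜 (j v) y) {x y : H}
    (hxy : (x, y) ∈ associatedGraph a j) : x = j (E.symm (k y)) := by
  obtain ⟨u, rfl, hu⟩ := hxy
  have hEu : E u = k y := by
    ext v
    rw [hE, hu, hk]
  rw [← hEu, E.symm_apply_apply]

end AssociatedOperator

theorem associated_operator_m_accretive_inverse_formula_general
    (V H : Type*) [NormedAddCommGroup V] [InnerProductSpace ℂ V]
    [NormedAddCommGroup H] [InnerProductSpace ℂ H]
    (a : V →L[ℂ] V →L⋆[ℂ] ℂ) (α c : ℝ) (hα : 0 < α)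
    (hcoer : ∀ u : V, α * ‖u‖ ^ 2 ≤ (a u u).re)
    (j : V →L[ℂ] H)
    (hjc : ∀ u : V, ‖j u‖ ≤ c * ‖u‖)
    (E : V ≃L[ℂ] (V →L⋆[ℂ] ℂ)) (hE : ∀ u v : V, E u v = a u v)
    (k : H →L[ℂ] (V →L⋆[ℂ] ℂ)) (hk : ∀ (y : H) (v : V), k y v = inner ℂ (j v) y) :
    (∀ x y : H, (∃ u : V, j u = x ∧ ∀ v : V, a u v = inner ℂ (j v) y) →
        (α / c ^ 2) * ‖x‖ ^ 2 ≤ (inner ℂ x y : ℂ).re) ∧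
    (∀ y : H, ∃ u : V, j u = j (E.symm (k y)) ∧ ∀ v : V, a u v = inner ℂ (j v) y) ∧
    (∀ x y : H, (∃ u : V, j u = x ∧ ∀ v : V, a u v = inner ℂ (j v) y) →
        x = j (E.symm (k y))) :=
  ⟨fun _ _ hxy => re_inner_ge_of_mem_associatedGraph hα.le hcoer hjc hxy,
    mem_associatedGraph_apply_symm hE hk,
    fun _ _ hxy => eq_apply_symm_of_mem_associatedGraph hE hk hxy⟩

/-- The operator `A` associated with `(a, j)` (graph: `(x,y) ∈ A` iff
`∃ u, j u = x ∧ ∀ v, a (u, v) = ⟨y, j v⟩_H`) is strictly m-accretive and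
`A⁻¹ = j ∘ 𝒜⁻¹ ∘ k`, where `𝒜 : V ≃ V*` is the Lax–Milgram isomorphism of `a`
and `k : H → V*`, `k y = ⟨y, j(·)⟩_H`, is the canonical injection.
Concretely: every point of the graph satisfies the strict accretivity estimate,
for every `y ∈ H` the pair `(j (𝒜⁻¹ (k y)), y)` lies in the graph (so `A` is
surjective), and any `(x, y)` in the graph has `x = j (𝒜⁻¹ (k y))`. -/
theorem associated_operator_m_accretive_inverse_formula
    (V H : Type*) [NormedAddCommGroup V] [InnerProductSpace ℂ V] [CompleteSpace V]
    [NormedAddCommGroup H] [InnerProductSpace ℂ H] [CompleteSpace H]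
    (a : V →L[ℂ] V →L⋆[ℂ] ℂ) (α c : ℝ) (hα : 0 < α) (hc : 0 < c)
    (hcoer : ∀ u : V, α * ‖u‖ ^ 2 ≤ (a u u).re)
    (j : V →L[ℂ] H) (hj_inj : Function.Injective j) (hj_dense : DenseRange j)
    (hjc : ∀ u : V, ‖j u‖ ≤ c * ‖u‖)
    (E : V ≃L[ℂ] (V →L⋆[ℂ] ℂ)) (hE : ∀ u v : V, E u v = a u v)
    (k : H →L[ℂ] (V →L⋆[ℂ] ℂ)) (hk : ∀ (y : H) (v : V), k y v = inner ℂ (j v) y) :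
    (∀ x y : H, (∃ u : V, j u = x ∧ ∀ v : V, a u v = inner ℂ (j v) y) →
        (α / c ^ 2) * ‖x‖ ^ 2 ≤ (inner ℂ x y : ℂ).re) ∧
    (∀ y : H, ∃ u : V, j u = j (E.symm (k y)) ∧ ∀ v : V, a u v = inner ℂ (j v) y) ∧
    (∀ x y : H, (∃ u : V, j u = x ∧ ∀ v : V, a u v = inner ℂ (j v) y) →
        x = j (E.symm (k y))) :=
  associated_operator_m_accretive_inverse_formula_general V H a α c hα hcoer j hjc E hE k hk
end

section
/- Let X be a complex Banach space, Ω ⊆ ℂ open, and for each z ∈ Ω let A_z be the generator of a C₀-semigroup T_z on X with ‖T_z(t)‖ ≤ M e^{ωt} for all t ≥ 0 and z ∈ Ω (M, ω independent of z). If z ↦ (λ − A_z)⁻¹ ∈ L(X) is holomorphic on Ω for some λ > ω, then z ↦ (μ − A_z)⁻¹ is holomorphic on Ω for every μ > ω, and ‖(μ − A_z)^{−n}‖ ≤ M/(μ − ω)ⁿ for all n ∈ ℕ, μ > ω. -/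
/-!
For each `z`, the Laplace transform `L_z x = ∫₀^∞ e^{-μt} T_z(t) x dt` is the resolvent
`(μ - A_z)⁻¹`. Writing `T_z(h) L_z x = e^{μh} (L_z x - ∫₀^h e^{-μt} T_z(t) x dt)` and
differentiating at `h = 0` shows that `L_z x` lies in the domain with
`A_z L_z x = μ L_z x - x`; since `L_z` commutes with every `T_z(t)`, it also commutes with `A_z`,
so `L_z (μ - A_z) = 1` on the domain. If `‖T_z(t) x‖ ≤ C e^{ωt}` for all `t`, then
`‖T_z(s) L_z x‖ ≤ C e^{ωs} / (μ - ω)`; iterating gives `‖L_z^n‖ ≤ M / (μ - ω)^n`.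

Two operators inverting `λ - A_z` and `μ - A_z` on the graph of `A_z` satisfy the resolvent
identity `R - L = (μ - λ) R L = (μ - λ) L R`, so `L_z = (1 + (μ - λ) R_z)⁻¹ R_z`. This is
holomorphic in `z` because inversion is analytic on the units of `L(X)`.
-/

open Filter

/-- `(x, y)` belongs to the graph of the generator of the semigroup `T`:
`y = lim_{t→0⁺} t⁻¹ (T(t)x − x)`. -/
def IsGenPoint {X : Type*} [NormedAddCommGroup X] [NormedSpace ℂ X]
    (T : ℝ → X →L[ℂ] X) (x y : X) : Prop :=
  Tendsto (fun t : ℝ => (t : ℂ)⁻¹ • (T t x - x)) (nhdsWithin 0 (Set.Ioi 0)) (nhds y)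

open MeasureTheory Set
open scoped Ring

section ExpBounded

variable {E : Type*} [NormedAddCommGroup E] [NormedSpace ℝ E] {f : ℝ → E} {C ω μ : ℝ}

theorem norm_exp_neg_mul_smul_le {t : ℝ} (hf : ‖f t‖ ≤ C * Real.exp (ω * t)) :
    ‖Real.exp (-(μ * t)) • f t‖ ≤ C * Real.exp ((ω - μ) * t) := by
  rw [norm_smul, Real.norm_of_nonneg (Real.exp_pos _).le]
  calc Real.exp (-(μ * t)) * ‖f t‖ ≤ Real.exp (-(μ * t)) * (C * Real.exp (ω * t)) := by gcongr
    _ = C * Real.exp ((ω - μ) * t) := by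
      rw [mul_left_comm, ← Real.exp_add]; ring_nf

theorem integral_exp_sub_mul_Ioi (hμ : ω < μ) :
    ∫ t in Ioi (0 : ℝ), Real.exp ((ω - μ) * t) = 1 / (μ - ω) := by
  rw [integral_exp_mul_Ioi (by linarith), mul_zero, Real.exp_zero, neg_div, ← div_neg, neg_sub]

theorem integrableOn_exp_neg_mul_smul
    (hf : AEStronglyMeasurable f (volume.restrict (Ioi 0)))
    (hfC : ∀ t, 0 < t → ‖f t‖ ≤ C * Real.exp (ω * t)) (hμ : ω < μ) :
    IntegrableOn (fun t => Real.exp (-(μ * t)) • f t) (Ioi 0) := by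
  refine ((integrableOn_exp_mul_Ioi (by linarith : ω - μ < 0) 0).const_mul C).mono'
    ((by fun_prop : Continuous fun t : ℝ => Real.exp (-(μ * t))).aestronglyMeasurable.smul hf)
    ?_
  filter_upwards [ae_restrict_mem measurableSet_Ioi] with t ht
  exact norm_exp_neg_mul_smul_le (hfC t ht)

theorem norm_integral_exp_neg_mul_smul_le (hfC : ∀ t, 0 < t → ‖f t‖ ≤ C * Real.exp (ω * t))
    (hμ : ω < μ) : ‖∫ t in Ioi (0 : ℝ), Real.exp (-(μ * t)) • f t‖ ≤ C / (μ - ω) := by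
  have hbound := norm_integral_le_of_norm_le
    ((integrableOn_exp_mul_Ioi (by linarith : ω - μ < 0) 0).const_mul C) <| by
      filter_upwards [ae_restrict_mem measurableSet_Ioi] with t ht
      exact norm_exp_neg_mul_smul_le (hfC t ht)
  rwa [integral_const_mul, integral_exp_sub_mul_Ioi hμ, mul_one_div] at hbound

theorem integral_comp_add_right_Ioi (g : ℝ → E) (a h : ℝ) :
    ∫ t in Ioi a, g (t + h) = ∫ t in Ioi (a + h), g t := by
  have := (measurePreserving_add_right volume h).setIntegral_preimage_emb
    (measurableEmbedding_addRight h) g (Ioi (a + h))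
  rwa [preimage_add_const_Ioi, add_sub_cancel_right] at this

end ExpBounded

section Generator

variable {X : Type*} [NormedAddCommGroup X] [NormedSpace ℂ X] {T : ℝ → X →L[ℂ] X} {x y : X}

theorem isGenPoint_iff_hasDerivWithinAt (h0 : T 0 = 1) :
    IsGenPoint T x y ↔ HasDerivWithinAt (fun t => T t x) y (Ici 0) 0 := by
  rw [hasDerivWithinAt_iff_tendsto_slope, Ici_sdiff_left, IsGenPoint]
  refine tendsto_congr fun t => ?_
  simp [slope_def_module, h0, ← Complex.ofReal_inv, Complex.coe_smul]

theorem IsGenPoint.unique {y' : X} (h : IsGenPoint T x y) (h' : IsGenPoint T x y') :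
    y = y' :=
  tendsto_nhds_unique h h'

theorem IsGenPoint.map (h : IsGenPoint T x y) (S : X →L[ℂ] X)
    (hS : ∀ t, 0 < t → T t (S x) = S (T t x)) : IsGenPoint T (S x) (S y) := by
  refine ((S.continuous.tendsto y).comp h).congr' ?_
  filter_upwards [self_mem_nhdsWithin] with t ht
  simp [hS t ht]

end Generator

theorem isUnit_one_add_smul_and_inverse_mul_eq {𝕜 A : Type*} [CommSemiring 𝕜] [Ring A]
    [Algebra 𝕜 A] {R L : A} {c : 𝕜} (h₁ : R - L = c • (R * L)) (h₂ : R - L = c • (L * R)) :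
    IsUnit (1 + c • R) ∧ (1 + c • R)⁻¹ʳ * R = L := by
  have hright : (1 + c • R) * (1 - c • L) = 1 := by
    calc (1 + c • R) * (1 - c • L) = 1 + c • (R - L - c • (R * L)) := by
          simp only [mul_sub, add_mul, smul_mul_smul_comm, smul_sub, smul_smul, one_mul, mul_one]
          abel
      _ = 1 := by rw [h₁, sub_self, smul_zero, add_zero]
  have hleft : (1 - c • L) * (1 + c • R) = 1 := by
    calc (1 - c • L) * (1 + c • R) = 1 + c • (R - L - c • (L * R)) := by
          simp only [mul_add, sub_mul, smul_mul_smul_comm, smul_sub, smul_smul, one_mul, mul_one]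
          abel
      _ = 1 := by rw [h₂, sub_self, smul_zero, add_zero]
  let u : Aˣ := ⟨1 + c • R, 1 - c • L, hright, hleft⟩
  refine ⟨u.isUnit, ?_⟩
  rw [show 1 + c • R = u from rfl, Ring.inverse_unit]
  calc (1 - c • L) * R = R - c • (L * R) := by rw [sub_mul, one_mul, smul_mul_assoc]
    _ = L := by rw [← h₂, sub_sub_cancel]

def IsResolvent {X : Type*} [NormedAddCommGroup X] [NormedSpace ℂ X]
    (T : ℝ → X →L[ℂ] X) (c : ℂ) (R : X →L[ℂ] X) : Prop :=
  (∀ x, IsGenPoint T (R x) (c • R x - x)) ∧ ∀ x y, IsGenPoint T x y → R (c • x - y) = x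

namespace IsResolvent

variable {X : Type*} [NormedAddCommGroup X] [NormedSpace ℂ X] {T : ℝ → X →L[ℂ] X}
  {a b : ℂ} {R L : X →L[ℂ] X}

theorem sub_eq_smul_mul (hR : IsResolvent T a R) (hL : IsResolvent T b L) :
    R - L = (b - a) • (R * L) := by
  ext x
  have h := hR.2 _ _ (hL.1 x)
  rw [show a • L x - (b • L x - x) = (a - b) • L x + x by module, map_add, map_smul] at h
  simp only [sub_apply, smul_apply, mul_apply_eq_comp]
  linear_combination (norm := module) h

theorem isUnit_and_inverse_mul_eq (hR : IsResolvent T a R) (hL : IsResolvent T b L) :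
    IsUnit (1 + (b - a) • R) ∧ (1 + (b - a) • R)⁻¹ʳ * R = L :=
  isUnit_one_add_smul_and_inverse_mul_eq (hR.sub_eq_smul_mul hL) <| by
    rw [← neg_sub L, hL.sub_eq_smul_mul hR, ← neg_smul, neg_sub]

end IsResolvent

structure IsC0Semigroup {X : Type*} [NormedAddCommGroup X] [NormedSpace ℂ X]
    (T : ℝ → X →L[ℂ] X) (M ω : ℝ) : Prop where
  one_at_zero : T 0 = 1
  add_eq_comp : ∀ s t : ℝ, 0 ≤ s → 0 ≤ t → T (s + t) = (T s).comp (T t)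
  continuousOn : ∀ x : X, ContinuousOn (fun t : ℝ => T t x) (Ici 0)
  norm_le : ∀ t : ℝ, 0 ≤ t → ‖T t‖ ≤ M * Real.exp (ω * t)

namespace IsC0Semigroup

variable {X : Type*} [NormedAddCommGroup X] [NormedSpace ℂ X] {T : ℝ → X →L[ℂ] X}
  {M ω μ : ℝ}

theorem bound_nonneg (hT : IsC0Semigroup T M ω) : 0 ≤ M := by
  simpa using (norm_nonneg _).trans (hT.norm_le 0 le_rfl)

theorem norm_apply_le (hT : IsC0Semigroup T M ω) (x : X) {t : ℝ} (ht : 0 ≤ t) :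
    ‖T t x‖ ≤ M * ‖x‖ * Real.exp (ω * t) :=
  calc ‖T t x‖ ≤ ‖T t‖ * ‖x‖ := (T t).le_opNorm x
    _ ≤ M * Real.exp (ω * t) * ‖x‖ := by gcongr; exact hT.norm_le t ht
    _ = M * ‖x‖ * Real.exp (ω * t) := by ring

theorem apply_comm (hT : IsC0Semigroup T M ω) (x : X) {s t : ℝ} (hs : 0 ≤ s) (ht : 0 ≤ t) :
    T s (T t x) = T t (T s x) := by
  rw [← ContinuousLinearMap.comp_apply, ← hT.add_eq_comp s t hs ht, add_comm,
    hT.add_eq_comp t s ht hs, ContinuousLinearMap.comp_apply]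

theorem integrableOn_laplace (hT : IsC0Semigroup T M ω) (hμ : ω < μ) (x : X) :
    IntegrableOn (fun t => Real.exp (-(μ * t)) • T t x) (Ioi 0) :=
  integrableOn_exp_neg_mul_smul
    (((hT.continuousOn x).mono Ioi_subset_Ici_self).aestronglyMeasurable measurableSet_Ioi)
    (fun _ ht => hT.norm_apply_le x ht.le) hμ

noncomputable def laplace (hT : IsC0Semigroup T M ω) (hμ : ω < μ) : X →L[ℂ] X :=
  LinearMap.mkContinuous
    { toFun := fun x => ∫ t in Ioi (0 : ℝ), Real.exp (-(μ * t)) • T t x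
      map_add' := fun x y => by
        simp only [map_add, smul_add]
        exact integral_add (hT.integrableOn_laplace hμ x) (hT.integrableOn_laplace hμ y)
      map_smul' := fun c x => by
        simp only [map_smul, RingHom.id_apply, ← integral_smul]
        simp only [smul_comm c] }
    (M / (μ - ω))
    (fun x => by
      simpa [div_mul_eq_mul_div] using
        norm_integral_exp_neg_mul_smul_le (fun t ht => hT.norm_apply_le x ht.le) hμ)

theorem laplace_apply (hT : IsC0Semigroup T M ω) (hμ : ω < μ) (x : X) :
    hT.laplace hμ x = ∫ t in Ioi (0 : ℝ), Real.exp (-(μ * t)) • T t x :=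
  rfl

variable [CompleteSpace X]

theorem apply_laplace (hT : IsC0Semigroup T M ω) (hμ : ω < μ) (x : X) {s : ℝ} (hs : 0 ≤ s) :
    T s (hT.laplace hμ x) = hT.laplace hμ (T s x) := by
  rw [laplace_apply, laplace_apply, ← (T s).integral_comp_comm (hT.integrableOn_laplace hμ x)]
  refine setIntegral_congr_fun measurableSet_Ioi fun t ht => ?_
  rw [(T s).map_smul_of_tower, hT.apply_comm x hs (le_of_lt ht)]

theorem norm_apply_laplace_le (hT : IsC0Semigroup T M ω) (hμ : ω < μ) {x : X} {C : ℝ}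
    (hC : ∀ t, 0 ≤ t → ‖T t x‖ ≤ C * Real.exp (ω * t)) {s : ℝ} (hs : 0 ≤ s) :
    ‖T s (hT.laplace hμ x)‖ ≤ C * Real.exp (ω * s) / (μ - ω) := by
  rw [apply_laplace hT hμ x hs, laplace_apply]
  refine norm_integral_exp_neg_mul_smul_le (fun t ht => ?_) hμ
  rw [← ContinuousLinearMap.comp_apply, ← hT.add_eq_comp t s ht.le hs]
  calc ‖T (t + s) x‖ ≤ C * Real.exp (ω * (t + s)) := hC _ (by linarith)
    _ = C * Real.exp (ω * s) * Real.exp (ω * t) := by rw [mul_add, Real.exp_add]; ring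

theorem norm_apply_laplace_pow_le (hT : IsC0Semigroup T M ω) (hμ : ω < μ) (n : ℕ) (x : X)
    {t : ℝ} (ht : 0 ≤ t) :
    ‖T t ((hT.laplace hμ ^ n) x)‖ ≤ M * ‖x‖ / (μ - ω) ^ n * Real.exp (ω * t) := by
  induction n generalizing t with
  | zero => simpa using hT.norm_apply_le x ht
  | succ n ih =>
    calc ‖T t ((hT.laplace hμ ^ (n + 1)) x)‖
        = ‖T t (hT.laplace hμ ((hT.laplace hμ ^ n) x))‖ := by rw [pow_succ']; rfl
      _ ≤ M * ‖x‖ / (μ - ω) ^ n * Real.exp (ω * t) / (μ - ω) :=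
        hT.norm_apply_laplace_le hμ (fun _ hs => ih hs) ht
      _ = M * ‖x‖ / (μ - ω) ^ (n + 1) * Real.exp (ω * t) := by
        rw [pow_succ]; field_simp

theorem norm_laplace_pow_le (hT : IsC0Semigroup T M ω) (hμ : ω < μ) (n : ℕ) :
    ‖hT.laplace hμ ^ n‖ ≤ M / (μ - ω) ^ n := by
  refine ContinuousLinearMap.opNorm_le_bound _
    (div_nonneg hT.bound_nonneg (pow_nonneg (by linarith) n)) fun x => ?_
  simpa [hT.one_at_zero, mul_div_right_comm] using hT.norm_apply_laplace_pow_le hμ n x le_rfl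

theorem apply_laplace_eq (hT : IsC0Semigroup T M ω) (hμ : ω < μ) (x : X) {h : ℝ}
    (hh : 0 ≤ h) :
    T h (hT.laplace hμ x) = Real.exp (μ * h) •
      (hT.laplace hμ x - ∫ t in (0 : ℝ)..h, Real.exp (-(μ * t)) • T t x) := by
  set f : ℝ → X := fun t => Real.exp (-(μ * t)) • T t x
  have hshift : ∀ t ∈ Ioi (0 : ℝ),
      Real.exp (-(μ * t)) • T t (T h x) = Real.exp (μ * h) • f (t + h) := fun t ht => by
    rw [← ContinuousLinearMap.comp_apply, ← hT.add_eq_comp t h (le_of_lt ht) hh, smul_smul,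
      ← Real.exp_add]
    ring_nf
  have htail : ∫ t in Ioi h, f t = hT.laplace hμ x - ∫ t in (0 : ℝ)..h, f t :=
    eq_sub_of_add_eq' <| intervalIntegral.integral_interval_add_Ioi (hT.integrableOn_laplace hμ x)
      ((hT.integrableOn_laplace hμ x).mono_set (Ioi_subset_Ioi hh))
  rw [apply_laplace hT hμ x hh, laplace_apply, setIntegral_congr_fun measurableSet_Ioi hshift,
    integral_smul, integral_comp_add_right_Ioi, zero_add, htail]

theorem isGenPoint_laplace (hT : IsC0Semigroup T M ω) (hμ : ω < μ) (x : X) :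
    IsGenPoint T (hT.laplace hμ x) ((μ : ℂ) • hT.laplace hμ x - x) := by
  set f : ℝ → X := fun t => Real.exp (-(μ * t)) • T t x
  have hf : ContinuousOn f (Ici 0) :=
    (by fun_prop : Continuous fun t : ℝ => Real.exp (-(μ * t))).continuousOn.smul
      (hT.continuousOn x)
  have hprimitive : HasDerivWithinAt (fun h => ∫ t in (0 : ℝ)..h, f t) x (Ici 0) 0 := by
    simpa [f, hT.one_at_zero] using intervalIntegral.integral_hasDerivWithinAt_right
      IntervalIntegrable.refl
      (hf.mono Ioi_subset_Ici_self |>.stronglyMeasurableAtFilter_nhdsWithin measurableSet_Ioi 0)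
      ((hf 0 self_mem_Ici).mono Ioi_subset_Ici_self)
  have hexp : HasDerivWithinAt (fun h => Real.exp (μ * h)) μ (Ici 0) 0 := by
    simpa using ((hasDerivAt_id (0 : ℝ)).const_mul μ).exp.hasDerivWithinAt
  rw [isGenPoint_iff_hasDerivWithinAt hT.one_at_zero]
  refine ((hexp.smul ((hasDerivWithinAt_const _ _ (hT.laplace hμ x)).sub hprimitive)).congr
    (fun h hh => hT.apply_laplace_eq hμ x hh) (hT.apply_laplace_eq hμ x le_rfl)).congr_deriv ?_
  simp [Complex.coe_smul, neg_add_eq_sub]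

theorem isResolvent_laplace (hT : IsC0Semigroup T M ω) (hμ : ω < μ) :
    IsResolvent T μ (hT.laplace hμ) := by
  refine ⟨hT.isGenPoint_laplace hμ, fun x y hxy => ?_⟩
  have hLy : hT.laplace hμ y = (μ : ℂ) • hT.laplace hμ x - x :=
    (hxy.map _ fun t ht => hT.apply_laplace hμ x ht.le).unique (hT.isGenPoint_laplace hμ x)
  rw [map_sub, map_smul, hLy, sub_sub_cancel]

end IsC0Semigroup

theorem resolvents_holomorphic_and_bounded_general
    (X : Type*) [NormedAddCommGroup X] [NormedSpace ℂ X] [CompleteSpace X]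
    (Ω : Set ℂ)
    (T : ℂ → ℝ → X →L[ℂ] X) (M ω : ℝ)
    (hT0 : ∀ z ∈ Ω, T z 0 = 1)
    (hTadd : ∀ z ∈ Ω, ∀ s t : ℝ, 0 ≤ s → 0 ≤ t →
      T z (s + t) = (T z s).comp (T z t))
    (hTcont : ∀ z ∈ Ω, ∀ x : X, ContinuousOn (fun t : ℝ => T z t x) (Set.Ici 0))
    (hTbound : ∀ z ∈ Ω, ∀ t : ℝ, 0 ≤ t → ‖T z t‖ ≤ M * Real.exp (ω * t))
    (lam : ℝ) (R : ℂ → X →L[ℂ] X)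
    (hR : ∀ z ∈ Ω, ∀ x : X, IsGenPoint (T z) (R z x) ((lam : ℂ) • R z x - x))
    (hR' : ∀ z ∈ Ω, ∀ x y : X, IsGenPoint (T z) x y → R z ((lam : ℂ) • x - y) = x)
    (hRholo : DifferentiableOn ℂ R Ω) :
    ∀ μ : ℝ, ω < μ → ∃ Rμ : ℂ → X →L[ℂ] X,
      DifferentiableOn ℂ Rμ Ω ∧
      ∀ z ∈ Ω,
        (∀ x : X, IsGenPoint (T z) (Rμ z x) ((μ : ℂ) • Rμ z x - x)) ∧
        (∀ x y : X, IsGenPoint (T z) x y → Rμ z ((μ : ℂ) • x - y) = x) ∧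
        (∀ n : ℕ, ‖(Rμ z) ^ n‖ ≤ M / (μ - ω) ^ n) := by
  intro μ hμ
  have hT : ∀ z ∈ Ω, IsC0Semigroup (T z) M ω := fun z hz =>
    ⟨hT0 z hz, hTadd z hz, hTcont z hz, hTbound z hz⟩
  have hRμ : ∀ z (hz : z ∈ Ω), IsUnit (1 + ((μ : ℂ) - lam) • R z) ∧
      (1 + ((μ : ℂ) - lam) • R z)⁻¹ʳ * R z = (hT z hz).laplace hμ := fun z hz =>
    IsResolvent.isUnit_and_inverse_mul_eq ⟨hR z hz, hR' z hz⟩ ((hT z hz).isResolvent_laplace hμ)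
  refine ⟨fun z => (1 + ((μ : ℂ) - lam) • R z)⁻¹ʳ * R z, ?_, fun z hz => ?_⟩
  · have hS : DifferentiableOn ℂ (fun z => 1 + ((μ : ℂ) - lam) • R z) Ω :=
      (differentiableOn_const 1).add (hRholo.fun_const_smul _)
    exact (hS.inverse fun z hz => (hRμ z hz).1).mul hRholo
  · obtain ⟨hgen, hinv⟩ := (hT z hz).isResolvent_laplace hμ
    simp only [(hRμ z hz).2]
    exact ⟨hgen, hinv, (hT z hz).norm_laplace_pow_le hμ⟩

/-- If `T_z` are `C₀`-semigroups with uniform bound `‖T_z(t)‖ ≤ M e^{ωt}` and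
`z ↦ (λ − A_z)⁻¹` is holomorphic on `Ω` for one `λ > ω`, then for every `μ > ω`
the resolvents `(μ − A_z)⁻¹` exist, `z ↦ (μ − A_z)⁻¹` is holomorphic on `Ω`,
and `‖(μ − A_z)^{−n}‖ ≤ M/(μ − ω)ⁿ` for all `n`. The resolvent `(μ − A_z)⁻¹`
is characterized by its action on the graph of the generator `A_z`. -/
theorem resolvents_holomorphic_and_bounded
    (X : Type*) [NormedAddCommGroup X] [NormedSpace ℂ X] [CompleteSpace X]
    (Ω : Set ℂ) (hΩ : IsOpen Ω)
    (T : ℂ → ℝ → X →L[ℂ] X) (M ω : ℝ) (hM : 0 < M)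
    (hT0 : ∀ z ∈ Ω, T z 0 = 1)
    (hTadd : ∀ z ∈ Ω, ∀ s t : ℝ, 0 ≤ s → 0 ≤ t →
      T z (s + t) = (T z s).comp (T z t))
    (hTcont : ∀ z ∈ Ω, ∀ x : X, ContinuousOn (fun t : ℝ => T z t x) (Set.Ici 0))
    (hTbound : ∀ z ∈ Ω, ∀ t : ℝ, 0 ≤ t → ‖T z t‖ ≤ M * Real.exp (ω * t))
    (lam : ℝ) (hlam : ω < lam) (R : ℂ → X →L[ℂ] X)
    (hR : ∀ z ∈ Ω, ∀ x : X, IsGenPoint (T z) (R z x) ((lam : ℂ) • R z x - x))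
    (hR' : ∀ z ∈ Ω, ∀ x y : X, IsGenPoint (T z) x y → R z ((lam : ℂ) • x - y) = x)
    (hRholo : DifferentiableOn ℂ R Ω) :
    ∀ μ : ℝ, ω < μ → ∃ Rμ : ℂ → X →L[ℂ] X,
      DifferentiableOn ℂ Rμ Ω ∧
      ∀ z ∈ Ω,
        (∀ x : X, IsGenPoint (T z) (Rμ z x) ((μ : ℂ) • Rμ z x - x)) ∧
        (∀ x y : X, IsGenPoint (T z) x y → Rμ z ((μ : ℂ) • x - y) = x) ∧
        (∀ n : ℕ, ‖(Rμ z) ^ n‖ ≤ M / (μ - ω) ^ n) :=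
  resolvents_holomorphic_and_bounded_general X Ω T M ω hT0 hTadd hTcont hTbound lam R hR hR' hRholo
end

section
/- Let A be the generator of a C₀-semigroup T on a Banach space X with ‖T(t)‖ ≤ M for all t ≥ 0. Then for every x ∈ X and every t₁ > 0, the convergence (I − (t/n)A)^{−n} x → T(t)x as n → ∞ is uniform for t ∈ [0, t₁]. -/
open Filter

/-!
For `s > 0` the resolvent is the Laplace transform `R s y = ∫₀^∞ e^{-τ} T(sτ) y dτ`; convolving
exponential densities gives `R s ^ (n + 1) y = ∫₀^∞ γₙ(τ) T(sτ) y dτ` with the Gamma density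
`γₙ(τ) = τⁿ e^{-τ} / n!`. For `s = t / (n + 1)` this averages `u ↦ T u y` against a probability
density in `u` with mean `t` and variance `t² / (n + 1)`, so uniform continuity of the orbit on
compact sets and a Chebyshev estimate give the convergence, uniformly for `t ∈ [0, t₁]`.
-/

open MeasureTheory Set Real

/-- The density of the Gamma distribution with shape `n + 1` and rate `1`. -/
noncomputable def gammaDensity (n : ℕ) (τ : ℝ) : ℝ := τ ^ n * exp (-τ) / n.factorial

namespace gammaDensity

lemma nonneg (n : ℕ) {τ : ℝ} (hτ : 0 ≤ τ) : 0 ≤ gammaDensity n τ := by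
  unfold gammaDensity; positivity

lemma zero_eq (τ : ℝ) : gammaDensity 0 τ = exp (-τ) := by
  simp [gammaDensity]

lemma pow_mul_eq (m n : ℕ) (τ : ℝ) :
    τ ^ m * gammaDensity n τ = (m + n).factorial / n.factorial * gammaDensity (m + n) τ := by
  unfold gammaDensity
  field_simp
  ring

lemma integrableOn_Ioi (n : ℕ) : IntegrableOn (gammaDensity n) (Ioi 0) := by
  have h := Real.GammaIntegral_convergent (s := n + 1) (by positivity)
  simp only [add_sub_cancel_right, Real.rpow_natCast] at h
  refine IntegrableOn.congr_fun (h.div_const (n.factorial : ℝ)) (fun τ _ => ?_) measurableSet_Ioi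
  simp only [gammaDensity]; ring

lemma integral_Ioi (n : ℕ) : ∫ τ in Ioi 0, gammaDensity n τ = 1 := by
  have h := Real.Gamma_eq_integral (s := n + 1) (by positivity)
  simp only [add_sub_cancel_right, Real.rpow_natCast, Real.Gamma_nat_eq_factorial] at h
  simp only [gammaDensity, integral_div]
  rw [setIntegral_congr_fun measurableSet_Ioi (g := fun τ => exp (-τ) * τ ^ n)
    (fun τ _ => mul_comm _ _), ← h]
  exact div_self (by positivity)

lemma integrableOn_pow_mul (m n : ℕ) :
    IntegrableOn (fun τ => τ ^ m * gammaDensity n τ) (Ioi 0) := by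
  simp only [pow_mul_eq]
  exact (integrableOn_Ioi _).const_mul _

lemma integral_pow_mul (m n : ℕ) :
    ∫ τ in Ioi 0, τ ^ m * gammaDensity n τ = (m + n).factorial / n.factorial := by
  simp only [pow_mul_eq, integral_const_mul, integral_Ioi, mul_one]

lemma integrableOn_sq_sub_mul (n : ℕ) (c : ℝ) :
    IntegrableOn (fun τ => (τ - c) ^ 2 * gammaDensity n τ) (Ioi 0) := by
  have h := ((integrableOn_pow_mul 2 n).sub ((integrableOn_pow_mul 1 n).const_mul (2 * c))).add
    ((integrableOn_pow_mul 0 n).const_mul (c ^ 2))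
  exact h.congr_fun (fun τ _ => by simp only [Pi.add_apply, Pi.sub_apply]; ring) measurableSet_Ioi

lemma integral_sq_sub_mul (n : ℕ) :
    ∫ τ in Ioi 0, (τ - (n + 1)) ^ 2 * gammaDensity n τ = (n + 1 : ℝ) := by
  have h2 := integrableOn_pow_mul 2 n
  have h1 := (integrableOn_pow_mul 1 n).const_mul (2 * (n + 1 : ℝ))
  have h0 := (integrableOn_pow_mul 0 n).const_mul ((n + 1 : ℝ) ^ 2)
  rw [setIntegral_congr_fun measurableSet_Ioi (fun τ _ => (by ring :
      (τ - (n + 1)) ^ 2 * gammaDensity n τ = τ ^ 2 * gammaDensity n τ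
        - 2 * (n + 1) * (τ ^ 1 * gammaDensity n τ) + (n + 1) ^ 2 * (τ ^ 0 * gammaDensity n τ))),
    integral_add (h2.fun_sub h1) h0, integral_sub h2 h1, integral_const_mul, integral_const_mul,
    integral_pow_mul, integral_pow_mul, integral_pow_mul, zero_add, add_comm 2, add_comm 1,
    Nat.factorial_succ, Nat.factorial_succ]
  push_cast
  field_simp
  ring

lemma integral_exp_neg_mul_sub (n : ℕ) (u : ℝ) :
    ∫ σ in (0)..u, exp (-σ) * gammaDensity n (u - σ) = gammaDensity (n + 1) u := by
  have h : ∀ σ, exp (-σ) * gammaDensity n (u - σ) = exp (-u) / n.factorial * (u - σ) ^ n := by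
    intro σ
    simp only [gammaDensity, div_eq_mul_inv]
    rw [show -u = -σ + -(u - σ) by ring, exp_add]
    ring
  simp only [h, intervalIntegral.integral_const_mul]
  rw [intervalIntegral.integral_comp_sub_left (fun x => x ^ n), sub_self, sub_zero, integral_pow]
  simp only [gammaDensity, Nat.factorial_succ]
  push_cast
  field_simp
  ring

end gammaDensity

section HalfLineIntegrals

variable {E : Type*} [NormedAddCommGroup E] [NormedSpace ℝ E]

lemma setIntegral_Ioi_eq_setIntegral_Ioi_zero_add (f : ℝ → E) (a : ℝ) :
    ∫ x in Ioi a, f x = ∫ x in Ioi 0, f (x + a) := by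
  rw [← integral_indicator measurableSet_Ioi, ← integral_indicator measurableSet_Ioi,
    ← integral_add_right_eq_self _ a]
  congr 1 with x
  simp only [indicator_apply, mem_Ioi, lt_add_iff_pos_left]

lemma MeasureTheory.IntegrableOn.smul_comp_affine {g : ℝ → ℝ} {φ : ℝ → E} {C : ℝ}
    (hg : IntegrableOn g (Ioi 0)) (hφ : ContinuousOn φ (Ici 0)) (hC : ∀ u ≥ 0, ‖φ u‖ ≤ C)
    {a b : ℝ} (ha : 0 ≤ a) (hb : 0 ≤ b) :
    IntegrableOn (fun τ => g τ • φ (a + b * τ)) (Ioi 0) := by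
  have hmaps : MapsTo (fun τ => a + b * τ) (Ioi 0) (Ici 0) := fun τ hτ =>
    add_nonneg ha (mul_nonneg hb (le_of_lt hτ))
  refine hg.smul_bdd C ?_ ?_
  · exact ((hφ.comp (by fun_prop) hmaps).aestronglyMeasurable measurableSet_Ioi)
  · exact (ae_restrict_iff' measurableSet_Ioi).2 (Eventually.of_forall fun τ hτ => hC _ (hmaps hτ))

lemma integral_integral_eq_integral_integral_sub {F : ℝ × ℝ → E}
    (hF : Integrable F (volume.prod volume)) :
    ∫ σ, ∫ τ, F (σ, τ) = ∫ u, ∫ σ, F (σ, u - σ) := by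
  have hshear : MeasurePreserving (MeasurableEquiv.shearSubRight ℝ) (volume.prod volume)
      (volume.prod volume) := measurePreserving_prod_sub volume volume
  rw [← integral_prod _ hF, ← hshear.integral_comp' F]
  exact integral_prod_symm _
    ((hshear.integrable_comp_emb (MeasurableEquiv.measurableEmbedding _)).2 hF)

lemma integral_indicator_mul_indicator_sub (f g : ℝ → ℝ) (u : ℝ) :
    ∫ σ, (Ioi 0).indicator f σ * (Ioi 0).indicator g (u - σ) =
      (Ioi 0).indicator (fun u => ∫ σ in (0)..u, f σ * g (u - σ)) u := by
  by_cases hu : u ∈ Ioi 0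
  · rw [indicator_of_mem hu, intervalIntegral.integral_of_le (le_of_lt hu),
      integral_Ioc_eq_integral_Ioo, ← integral_indicator measurableSet_Ioo]
    refine integral_congr_ae (ae_of_all _ fun σ => ?_)
    by_cases hσ : σ ∈ Ioo 0 u
    · simp [hσ, hσ.1, hσ.2]
    · rw [indicator_of_notMem hσ]
      rcases not_and_or.1 hσ with hσ | hσ
      · simp [hσ]
      · simp [hσ]
  · have hzero : ∀ σ, (Ioi 0).indicator f σ * (Ioi 0).indicator g (u - σ) = 0 := fun σ => by
      by_cases hσ : σ ∈ Ioi 0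
      · simp only [mem_Ioi, not_lt] at hu hσ
        simp [show ¬ 0 < u - σ by linarith]
      · simp [hσ]
    simp [hu, hzero]

variable [CompleteSpace E]

lemma hasDerivWithinAt_setIntegral_Ioi {h : ℝ → E} {a : ℝ} (hint : IntegrableOn h (Ioi a))
    (hcont : ContinuousOn h (Ici a)) :
    HasDerivWithinAt (fun b => ∫ x in Ioi b, h x) (-h a) (Ici a) a := by
  have hFTC : HasDerivWithinAt (fun b => ∫ x in a..b, h x) (h a) (Ici a) a :=
    intervalIntegral.integral_hasDerivWithinAt_right
      (hcont.mono Icc_subset_Ici_self |>.intervalIntegrable_of_Icc le_rfl)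
      (hcont.mono Ioi_subset_Ici_self |>.stronglyMeasurableAtFilter_nhdsWithin measurableSet_Ioi a)
      ((hcont a self_mem_Ici).mono Ioi_subset_Ici_self)
  refine (hFTC.const_sub (∫ x in Ioi a, h x)).congr (fun b hb => ?_) (by simp)
  rw [← intervalIntegral.integral_Ioi_sub_Ioi hint hb, sub_sub_cancel]

theorem setIntegral_Ioi_smul_setIntegral_Ioi_add {f g : ℝ → ℝ} {φ : ℝ → E} {C : ℝ}
    (hf : IntegrableOn f (Ioi 0)) (hg : IntegrableOn g (Ioi 0))
    (hφ : ContinuousOn φ (Ici 0)) (hC : ∀ u ≥ 0, ‖φ u‖ ≤ C) :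
    ∫ σ in Ioi 0, f σ • ∫ τ in Ioi 0, g τ • φ (σ + τ) =
      ∫ u in Ioi 0, (∫ σ in (0)..u, f σ * g (u - σ)) • φ u := by
  -- A continuous extension of `φ` to `ℝ` makes the integrand on the plane measurable.
  set φ' : ℝ → E := fun u => φ (max u 0)
  have hφ' : Continuous φ' :=
    hφ.comp_continuous (continuous_id.max continuous_const) (fun u => le_max_right u 0)
  have hφ'_eq : ∀ u > 0, φ' u = φ u := fun u hu => by simp only [φ', max_eq_left hu.le]
  set f' := (Ioi (0 : ℝ)).indicator f
  set g' := (Ioi (0 : ℝ)).indicator g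
  set F : ℝ × ℝ → E := fun p => (f' p.1 * g' p.2) • φ' (p.1 + p.2)
  have hF : Integrable F (volume.prod volume) :=
    (((integrable_indicator_iff measurableSet_Ioi).2 hf).mul_prod
      ((integrable_indicator_iff measurableSet_Ioi).2 hg)).smul_bdd C
      (hφ'.comp continuous_add).aestronglyMeasurable
      (ae_of_all _ fun p => hC _ (le_max_right _ _))
  have hL : ∫ σ in Ioi 0, f σ • ∫ τ in Ioi 0, g τ • φ (σ + τ) = ∫ σ, ∫ τ, F (σ, τ) := by
    rw [← integral_indicator measurableSet_Ioi]
    congr 1 with σ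
    simp only [F, mul_smul, integral_smul]
    by_cases hσ : σ ∈ Ioi 0
    · rw [indicator_of_mem hσ, ← integral_indicator measurableSet_Ioi]
      congr 1
      · exact (indicator_of_mem hσ f).symm
      refine integral_congr_ae (ae_of_all _ fun τ => ?_)
      by_cases hτ : τ ∈ Ioi 0
      · simp [g', hτ, hφ'_eq _ (add_pos hσ hτ)]
      · simp [g', hτ]
    · simp [f', hσ]
  have hR : ∫ u in Ioi 0, (∫ σ in (0)..u, f σ * g (u - σ)) • φ u =
      ∫ u, ∫ σ, F (σ, u - σ) := by
    rw [← integral_indicator measurableSet_Ioi]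
    congr 1 with u
    simp only [F, add_sub_cancel, integral_smul_const, f', g',
      integral_indicator_mul_indicator_sub]
    by_cases hu : u ∈ Ioi 0
    · simp [hu, hφ'_eq u hu]
    · simp [hu]
  rw [hL, hR, integral_integral_eq_integral_integral_sub hF]

end HalfLineIntegrals

section Approximation

variable {E : Type*} [NormedAddCommGroup E] {φ : ℝ → E} {C : ℝ}

lemma exists_norm_sub_le_add_mul_sq (hφ : ContinuousOn φ (Ici 0)) (hC : ∀ u ≥ 0, ‖φ u‖ ≤ C)
    (t₁ : ℝ) {ε : ℝ} (hε : 0 < ε) :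
    ∃ K ≥ 0, ∀ t ∈ Icc 0 t₁, ∀ u ≥ 0, ‖φ u - φ t‖ ≤ ε + K * (u - t) ^ 2 := by
  have huc : UniformContinuousOn φ (Icc 0 (t₁ + 1)) :=
    isCompact_Icc.uniformContinuousOn_of_continuous (hφ.mono fun u hu => hu.1)
  obtain ⟨δ, hδ, hφδ⟩ := Metric.uniformContinuousOn_iff_le.1 huc ε hε
  set r := min δ 1
  have hr : 0 < r := lt_min hδ one_pos
  have hC0 : 0 ≤ C := (norm_nonneg _).trans (hC 0 le_rfl)
  refine ⟨2 * C / r ^ 2, by positivity, fun t ht u hu => ?_⟩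
  rcases le_or_gt |u - t| r with hut | hut
  · have hu₁ : u ≤ t₁ + 1 := by linarith [(abs_le.1 hut).2, ht.2, min_le_right δ 1]
    have hφut := hφδ u ⟨hu, hu₁⟩ t ⟨ht.1, by linarith [ht.2]⟩
      ((Real.dist_eq u t).le.trans (hut.trans (min_le_left δ 1)))
    rw [dist_eq_norm] at hφut
    have : 0 ≤ 2 * C / r ^ 2 * (u - t) ^ 2 := by positivity
    linarith
  · calc ‖φ u - φ t‖ ≤ C + C := (norm_sub_le _ _).trans (add_le_add (hC u hu) (hC t ht.1))
      _ = 2 * C / r ^ 2 * r ^ 2 := by field_simp; ring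
      _ ≤ 2 * C / r ^ 2 * (u - t) ^ 2 := by
        rw [← sq_abs (u - t)]
        gcongr
      _ ≤ ε + 2 * C / r ^ 2 * (u - t) ^ 2 := by linarith

variable [NormedSpace ℝ E] [CompleteSpace E]

lemma norm_setIntegral_gammaDensity_smul_sub_le (hφ : ContinuousOn φ (Ici 0))
    (hC : ∀ u ≥ 0, ‖φ u‖ ≤ C) {t ε K : ℝ} (ht : 0 ≤ t)
    (hK : ∀ u ≥ 0, ‖φ u - φ t‖ ≤ ε + K * (u - t) ^ 2) (n : ℕ) :
    ‖(∫ τ in Ioi 0, gammaDensity n τ • φ (t / (n + 1) * τ)) - φ t‖ ≤ ε + K * t ^ 2 / (n + 1) := by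
  set s := t / (n + 1)
  have hs : 0 ≤ s := by positivity
  have hint : IntegrableOn (fun τ => gammaDensity n τ • φ (s * τ)) (Ioi 0) := by
    simpa using (gammaDensity.integrableOn_Ioi n).smul_comp_affine hφ hC le_rfl hs
  have hdiff : (∫ τ in Ioi 0, gammaDensity n τ • φ (s * τ)) - φ t =
      ∫ τ in Ioi 0, gammaDensity n τ • (φ (s * τ) - φ t) := by
    simp_rw [smul_sub]
    rw [integral_sub hint ((gammaDensity.integrableOn_Ioi n).smul_const _), integral_smul_const,
      gammaDensity.integral_Ioi, one_smul]
  have hbound : ∀ τ ∈ Ioi (0 : ℝ), ‖gammaDensity n τ • (φ (s * τ) - φ t)‖ ≤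
      ε * gammaDensity n τ + K * s ^ 2 * ((τ - (n + 1)) ^ 2 * gammaDensity n τ) := by
    intro τ hτ
    have hg := gammaDensity.nonneg n (le_of_lt hτ)
    have hsτ : s * τ - t = s * (τ - (n + 1)) := by simp only [s]; field_simp
    rw [norm_smul, Real.norm_of_nonneg hg]
    calc gammaDensity n τ * ‖φ (s * τ) - φ t‖
        ≤ gammaDensity n τ * (ε + K * (s * τ - t) ^ 2) :=
          mul_le_mul_of_nonneg_left (hK _ (mul_nonneg hs (le_of_lt hτ))) hg
      _ = _ := by rw [hsτ]; ring
  have hmaj_int := ((gammaDensity.integrableOn_Ioi n).const_mul ε).add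
    ((gammaDensity.integrableOn_sq_sub_mul n (n + 1)).const_mul (K * s ^ 2))
  calc _ = ‖∫ τ in Ioi 0, gammaDensity n τ • (φ (s * τ) - φ t)‖ := by rw [hdiff]
    _ ≤ ∫ τ in Ioi 0, (ε * gammaDensity n τ
          + K * s ^ 2 * ((τ - (n + 1)) ^ 2 * gammaDensity n τ)) :=
        norm_integral_le_of_norm_le hmaj_int
          ((ae_restrict_iff' measurableSet_Ioi).2 (Eventually.of_forall hbound))
    _ = ε + K * t ^ 2 / (n + 1) := by
        rw [integral_add ((gammaDensity.integrableOn_Ioi n).const_mul ε)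
            ((gammaDensity.integrableOn_sq_sub_mul n (n + 1)).const_mul (K * s ^ 2)),
          integral_const_mul, integral_const_mul, gammaDensity.integral_Ioi,
          gammaDensity.integral_sq_sub_mul]
        simp only [s]
        field_simp

theorem tendstoUniformlyOn_setIntegral_gammaDensity_smul (hφ : ContinuousOn φ (Ici 0))
    (hC : ∀ u ≥ 0, ‖φ u‖ ≤ C) (t₁ : ℝ) :
    TendstoUniformlyOn (fun (n : ℕ) t => ∫ τ in Ioi 0, gammaDensity n τ • φ (t / (n + 1) * τ))
      φ atTop (Icc 0 t₁) := by
  rw [Metric.tendstoUniformlyOn_iff]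
  intro ε hε
  obtain ⟨K, hK, hφK⟩ := exists_norm_sub_le_add_mul_sq hφ hC t₁ (half_pos hε)
  have hsmall : ∀ᶠ n : ℕ in atTop, K * t₁ ^ 2 * (1 / ((n : ℝ) + 1)) < ε / 2 := by
    refine ((tendsto_one_div_add_atTop_nhds_zero_nat.const_mul (K * t₁ ^ 2)).eventually
      (gt_mem_nhds ?_))
    simpa using half_pos hε
  filter_upwards [hsmall] with n hn t ht
  rw [dist_comm, dist_eq_norm]
  have ht₁ : t ^ 2 ≤ t₁ ^ 2 := pow_le_pow_left₀ ht.1 ht.2 2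
  calc _ ≤ ε / 2 + K * t ^ 2 / (n + 1) :=
        norm_setIntegral_gammaDensity_smul_sub_le hφ hC ht.1 (hφK t ht) n
    _ ≤ ε / 2 + K * t₁ ^ 2 * (1 / ((n : ℝ) + 1)) := by
        rw [mul_one_div]
        gcongr
    _ < ε := by linarith

end Approximation

structure IsBoundedC0Semigroup {X : Type*} [NormedAddCommGroup X] [NormedSpace ℂ X]
    (T : ℝ → X →L[ℂ] X) (M : ℝ) : Prop where
  map_zero : T 0 = 1
  map_add : ∀ s t : ℝ, 0 ≤ s → 0 ≤ t → T (s + t) = (T s).comp (T t)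
  continuousOn_apply : ∀ x : X, ContinuousOn (fun t => T t x) (Ici 0)
  norm_le : ∀ t : ℝ, 0 ≤ t → ‖T t‖ ≤ M

section Semigroup

variable {X : Type*} [NormedAddCommGroup X] [NormedSpace ℂ X] {T : ℝ → X →L[ℂ] X} {M : ℝ}

lemma isGenPoint_of_hasDerivWithinAt (hT0 : T 0 = 1) {x v : X}
    (h : HasDerivWithinAt (fun t => T t x) v (Ioi 0) 0) : IsGenPoint T x v := by
  rw [hasDerivWithinAt_iff_tendsto_slope, sdiff_singleton_eq_self self_notMem_Ioi] at h
  refine h.congr fun t => ?_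
  rw [slope_def_module, hT0, sub_zero, one_apply_eq_self, ← Complex.ofReal_inv,
    Complex.coe_smul]

namespace IsBoundedC0Semigroup

lemma norm_apply_le (hT : IsBoundedC0Semigroup T M) {t : ℝ} (ht : 0 ≤ t) (x : X) :
    ‖T t x‖ ≤ M * ‖x‖ :=
  (T t).le_of_opNorm_le (hT.norm_le t ht) x

lemma continuousOn_apply_mul (hT : IsBoundedC0Semigroup T M) {s : ℝ} (hs : 0 ≤ s) (x : X) :
    ContinuousOn (fun u => T (s * u) x) (Ici 0) :=
  (hT.continuousOn_apply x).comp (by fun_prop) fun _ hu => mul_nonneg hs hu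

variable [CompleteSpace X]

lemma apply_setIntegral_smul (hT : IsBoundedC0Semigroup T M) {g : ℝ → ℝ}
    (hg : IntegrableOn g (Ioi 0)) {s u : ℝ} (hs : 0 ≤ s) (hu : 0 ≤ u) (x : X) :
    T u (∫ τ in Ioi 0, g τ • T (s * τ) x) = ∫ τ in Ioi 0, g τ • T (u + s * τ) x := by
  have hint := hg.smul_comp_affine (hT.continuousOn_apply x) (fun t ht => hT.norm_apply_le ht x)
    le_rfl hs
  simp only [zero_add] at hint
  rw [← ContinuousLinearMap.integral_comp_comm _ hint]
  refine setIntegral_congr_fun measurableSet_Ioi fun τ hτ => ?_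
  rw [(T u).map_smul_of_tower, hT.map_add u _ hu (mul_nonneg hs (le_of_lt hτ))]
  rfl

lemma apply_setIntegral_exp_neg_smul (hT : IsBoundedC0Semigroup T M) {s t : ℝ} (hs : 0 < s)
    (ht : 0 ≤ t) (y : X) :
    T t (∫ σ in Ioi 0, exp (-σ) • T (s * σ) y) =
      exp (t / s) • ∫ σ in Ioi (t / s), exp (-σ) • T (s * σ) y := by
  rw [setIntegral_Ioi_eq_setIntegral_Ioi_zero_add _ (t / s),
    hT.apply_setIntegral_smul (integrableOn_exp_neg_Ioi 0) hs.le ht, ← integral_smul]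
  refine setIntegral_congr_fun measurableSet_Ioi fun σ _ => ?_
  simp only [smul_smul, ← exp_add]
  rw [show t / s + -(σ + t / s) = -σ by ring, show s * (σ + t / s) = t + s * σ by field_simp; ring]

variable {R : ℝ → X →L[ℂ] X}

lemma resolvent_apply_eq_integral (hT : IsBoundedC0Semigroup T M)
    (hR' : ∀ s : ℝ, 0 < s → ∀ x y : X, IsGenPoint T x y → R s (x - (s : ℂ) • y) = x)
    {s : ℝ} (hs : 0 < s) (y : X) :
    R s y = ∫ τ in Ioi 0, exp (-τ) • T (s * τ) y := by
  set h : ℝ → X := fun σ => exp (-σ) • T (s * σ) y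
  set J : ℝ → X := fun a => ∫ σ in Ioi a, h σ
  have hcont : ContinuousOn h (Ici 0) :=
    (continuous_exp.comp continuous_neg).continuousOn.smul (hT.continuousOn_apply_mul hs.le y)
  have hint : IntegrableOn h (Ioi 0) := by
    simpa using (integrableOn_exp_neg_Ioi 0).smul_comp_affine (hT.continuousOn_apply y)
      (fun t ht => hT.norm_apply_le ht y) le_rfl hs.le
  have hJ : HasDerivWithinAt J (-y) (Ici 0) 0 := by
    simpa [h, hT.map_zero] using hasDerivWithinAt_setIntegral_Ioi hint hcont
  -- On `[0, ∞)`, `t ↦ T t (J 0)` is `t ↦ exp (t / s) • J (t / s)`, differentiable by the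
  -- fundamental theorem of calculus.
  have hderiv : HasDerivWithinAt (fun t => exp (t / s) • J (t / s)) (s⁻¹ • (J 0 - y))
      (Ici 0) 0 := by
    have hdiv : HasDerivWithinAt (fun t : ℝ => t / s) s⁻¹ (Ici 0) 0 := by
      simpa using (hasDerivWithinAt_id 0 (Ici 0)).div_const s
    refine (hdiv.exp.smul (hJ.scomp_of_eq 0 hdiv (fun t ht => div_nonneg ht hs.le)
      (zero_div s).symm)).congr_deriv ?_
    simp only [zero_div, exp_zero, one_smul, one_mul, Function.comp_apply]
    module
  have hgen : IsGenPoint T (J 0) (s⁻¹ • (J 0 - y)) :=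
    isGenPoint_of_hasDerivWithinAt hT.map_zero
      ((hderiv.congr (fun t ht => hT.apply_setIntegral_exp_neg_smul hs ht y)
        (hT.apply_setIntegral_exp_neg_smul hs le_rfl y)).mono Ioi_subset_Ici_self)
  have := hR' s hs _ _ hgen
  rwa [Complex.coe_smul, smul_inv_smul₀ hs.ne', sub_sub_cancel] at this

lemma resolvent_pow_succ_apply_eq_integral (hT : IsBoundedC0Semigroup T M)
    (hR' : ∀ s : ℝ, 0 < s → ∀ x y : X, IsGenPoint T x y → R s (x - (s : ℂ) • y) = x)
    {s : ℝ} (hs : 0 < s) (y : X) (n : ℕ) :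
    (R s ^ (n + 1)) y = ∫ τ in Ioi 0, gammaDensity n τ • T (s * τ) y := by
  induction n with
  | zero => simp [hT.resolvent_apply_eq_integral hR' hs, gammaDensity.zero_eq]
  | succ n ih =>
    calc (R s ^ (n + 2)) y = R s ((R s ^ (n + 1)) y) := by rw [pow_succ']; rfl
      _ = ∫ σ in Ioi 0, exp (-σ) • T (s * σ) (∫ τ in Ioi 0, gammaDensity n τ • T (s * τ) y) := by
          rw [ih, hT.resolvent_apply_eq_integral hR' hs]
      _ = ∫ σ in Ioi 0, exp (-σ) • ∫ τ in Ioi 0, gammaDensity n τ • T (s * (σ + τ)) y := by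
          refine setIntegral_congr_fun measurableSet_Ioi fun σ hσ => ?_
          simp only [hT.apply_setIntegral_smul (gammaDensity.integrableOn_Ioi n) hs.le
            (mul_nonneg hs.le (le_of_lt hσ)), mul_add]
      _ = ∫ u in Ioi 0, (∫ σ in (0)..u, exp (-σ) * gammaDensity n (u - σ)) • T (s * u) y :=
          setIntegral_Ioi_smul_setIntegral_Ioi_add (integrableOn_exp_neg_Ioi 0)
            (gammaDensity.integrableOn_Ioi n) (hT.continuousOn_apply_mul hs.le y)
            (fun u hu => hT.norm_apply_le (mul_nonneg hs.le hu) y)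
      _ = _ := by simp only [gammaDensity.integral_exp_neg_mul_sub]

end IsBoundedC0Semigroup
end Semigroup

theorem exponential_formula_uniform_general
    (X : Type*) [NormedAddCommGroup X] [NormedSpace ℂ X] [CompleteSpace X]
    (T : ℝ → X →L[ℂ] X) (M : ℝ)
    (hT0 : T 0 = 1)
    (hTadd : ∀ s t : ℝ, 0 ≤ s → 0 ≤ t → T (s + t) = (T s).comp (T t))
    (hTcont : ∀ x : X, ContinuousOn (fun t : ℝ => T t x) (Set.Ici 0))
    (hTbound : ∀ t : ℝ, 0 ≤ t → ‖T t‖ ≤ M)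
    (R : ℝ → X →L[ℂ] X) (hR0 : R 0 = 1)
    (hR' : ∀ s : ℝ, 0 < s → ∀ x y : X,
      IsGenPoint T x y → R s (x - (s : ℂ) • y) = x) :
    ∀ x : X, ∀ t₁ : ℝ, 0 < t₁ →
      TendstoUniformlyOn (fun (n : ℕ) (t : ℝ) => ((R (t / n)) ^ n) x)
        (fun t => T t x) atTop (Set.Icc 0 t₁) := by
  have hT : IsBoundedC0Semigroup T M := ⟨hT0, hTadd, hTcont, hTbound⟩
  intro x t₁ _
  have hconv := tendstoUniformlyOn_setIntegral_gammaDensity_smul (hT.continuousOn_apply x)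
    (fun u hu => hT.norm_apply_le hu x) t₁
  rw [Metric.tendstoUniformlyOn_iff] at hconv ⊢
  intro ε hε
  -- `R (t / (m + 1)) ^ (m + 1)` is the `m`-th Gamma average, hence the index shift.
  filter_upwards [(tendsto_sub_atTop_nat 1).eventually (hconv ε hε), eventually_ge_atTop 1]
    with n hn hn1 t ht
  obtain ⟨m, rfl⟩ := Nat.exists_eq_add_of_le' hn1
  rcases ht.1.eq_or_lt with rfl | ht0
  · simpa [hR0, hT0] using hε
  · rw [hT.resolvent_pow_succ_apply_eq_integral hR' (by positivity)]
    simpa using hn t ht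

/-- Exponential formula (Pazy, Theorem I.8.3): for a bounded `C₀`-semigroup `T`
with generator `A`, `(I − (t/n)A)^{−n} x → T(t)x` uniformly for `t ∈ [0, t₁]`.
Here `R s = (I − sA)⁻¹` is characterized via the graph of the generator, with
`R 0 = I`. -/
theorem exponential_formula_uniform
    (X : Type*) [NormedAddCommGroup X] [NormedSpace ℂ X] [CompleteSpace X]
    (T : ℝ → X →L[ℂ] X) (M : ℝ)
    (hT0 : T 0 = 1)
    (hTadd : ∀ s t : ℝ, 0 ≤ s → 0 ≤ t → T (s + t) = (T s).comp (T t))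
    (hTcont : ∀ x : X, ContinuousOn (fun t : ℝ => T t x) (Set.Ici 0))
    (hTbound : ∀ t : ℝ, 0 ≤ t → ‖T t‖ ≤ M)
    (R : ℝ → X →L[ℂ] X) (hR0 : R 0 = 1)
    (hR : ∀ s : ℝ, 0 < s → ∀ y : X,
      IsGenPoint T (R s y) ((s : ℂ)⁻¹ • (R s y - y)))
    (hR' : ∀ s : ℝ, 0 < s → ∀ x y : X,
      IsGenPoint T x y → R s (x - (s : ℂ) • y) = x) :
    ∀ x : X, ∀ t₁ : ℝ, 0 < t₁ →
      TendstoUniformlyOn (fun (n : ℕ) (t : ℝ) => ((R (t / n)) ^ n) x)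
        (fun t => T t x) atTop (Set.Icc 0 t₁) :=
  exponential_formula_uniform_general X T M hT0 hTadd hTcont hTbound R hR0 hR'
end
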